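/- Let m ≥ 1, ε > 0 and δ > 0. Then for every wavenumber k ∈ ℝ, every eigenvalue σ ∈ ℂ of the linear-stability matrix A_δ(k) satisfies Re σ ≤ 0. That is, if the scent decays too rapidly (m ≥ 1), the uniform steady state is linearly stable at all wavenumbers and no territorial patterns form. -/

import Mathlib

/-!
The matrix has the block form `[[a I, c J], [d J, -b I]]` with `J` the 2×2 swap, so its
characteristic polynomial splits into the two quadratics `σ² + (b - a) σ - a b ∓ c d`.
A monic real quadratic with nonnegative coefficients has no root in the open right half-plane,
so it suffices that `a ≤ b` and `|c d| ≤ -a b`. Since `|sin (δ k)| ≤ |δ k|`, the nonlocal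
coupling satisfies `|c d| ≤ 2 (2 - 1/M) m k² / (ε M)` with `M = 1 + m`, while
`-a b = (M² - 1) k² / (ε M)`; comparing the two reduces to `(M - 1)(M - 2) ≥ 0`, i.e. `m ≥ 1`.
-/

/-- The nonlocal linear-stability matrix `A_δ(k)` for parameters `m, ε, δ` and
wavenumber `k`: `A_δ(k) = [[a,0,0,c],[0,a,c,0],[d,0,−b,0],[0,d,0,−b]]` with
`a = (1/(1+m)² − 1)k²`, `b = (1+m)/ε`, `c = −2(2 − 1/(1+m))·(k/δ)·sin(δk)`,
`d = m/(ε(1+m))`. -/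
noncomputable def Adelta (m ε δ k : ℝ) : Matrix (Fin 4) (Fin 4) ℝ :=
  !![(1 / (1 + m) ^ 2 - 1) * k ^ 2, 0, 0,
       -2 * (2 - 1 / (1 + m)) * (k / δ) * Real.sin (δ * k);
     0, (1 / (1 + m) ^ 2 - 1) * k ^ 2,
       -2 * (2 - 1 / (1 + m)) * (k / δ) * Real.sin (δ * k), 0;
     m / (ε * (1 + m)), 0, -((1 + m) / ε), 0;
     0, m / (ε * (1 + m)), 0, -((1 + m) / ε)]

/-- `σ ∈ ℂ` is an eigenvalue of the real matrix `M`. -/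
def IsEigC (M : Matrix (Fin 4) (Fin 4) ℝ) (σ : ℂ) : Prop :=
  (M.map (fun x : ℝ => (x : ℂ)) - σ • 1).det = 0

open Matrix

def crossMatrix {R : Type*} [Ring R] (a b c d : R) : Matrix (Fin 4) (Fin 4) R :=
  !![a, 0, 0, c; 0, a, c, 0; d, 0, -b, 0; 0, d, 0, -b]

section crossMatrix

variable {R S : Type*}

lemma crossMatrix_map [Ring R] [Ring S] (f : R →+* S) (a b c d : R) :
    (crossMatrix a b c d).map f = crossMatrix (f a) (f b) (f c) (f d) := by
  ext i j
  fin_cases i <;> fin_cases j <;> simp [crossMatrix]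

lemma det_crossMatrix_sub_smul_one [CommRing R] (a b c d σ : R) :
    (crossMatrix a b c d - σ • 1).det
      = (σ ^ 2 + (b - a) * σ + (-(a * b) - c * d)) * (σ ^ 2 + (b - a) * σ + (-(a * b) + c * d)) := by
  have h : crossMatrix a b c d - σ • 1
      = !![a - σ, 0, 0, c; 0, a - σ, c, 0; d, 0, -b - σ, 0; 0, d, 0, -b - σ] := by
    ext i j
    fin_cases i <;> fin_cases j <;> simp [crossMatrix, one_apply]
  rw [h, det_succ_row_zero]
  simp [Fin.sum_univ_succ, det_fin_three, Fin.succAbove]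
  ring

end crossMatrix

lemma Complex.re_nonpos_of_sq_add_mul_add_eq_zero {B C : ℝ} (hB : 0 ≤ B) (hC : 0 ≤ C) {σ : ℂ}
    (h : σ ^ 2 + B * σ + C = 0) : σ.re ≤ 0 := by
  have hre := congrArg Complex.re h
  have him := congrArg Complex.im h
  simp only [pow_two, add_re, add_im, mul_re, mul_im, ofReal_re, ofReal_im, zero_re,
    zero_im] at hre him
  by_cases hy : σ.im = 0
  · rw [hy] at hre
    nlinarith
  · have : 2 * σ.re + B = 0 := mul_right_cancel₀ hy (by linarith)
    linarith

lemma re_nonpos_of_isEigC_crossMatrix {a b c d : ℝ} (hab : a ≤ b) (hcd : |c * d| ≤ -(a * b))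
    {σ : ℂ} (h : IsEigC (crossMatrix a b c d) σ) : σ.re ≤ 0 := by
  have hB : 0 ≤ b - a := sub_nonneg.mpr hab
  obtain ⟨hlow, hhigh⟩ := abs_le.mp hcd
  rw [IsEigC, show (fun x : ℝ => (x : ℂ)) = Complex.ofRealHom from rfl, crossMatrix_map,
    det_crossMatrix_sub_smul_one, mul_eq_zero] at h
  rcases h with h | h
  · exact Complex.re_nonpos_of_sq_add_mul_add_eq_zero hB (by linarith : 0 ≤ -(a * b) - c * d)
      (by push_cast; simpa using h)
  · exact Complex.re_nonpos_of_sq_add_mul_add_eq_zero hB (by linarith : 0 ≤ -(a * b) + c * d)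
      (by push_cast; simpa using h)

lemma abs_div_mul_sin_mul_le_sq (k δ : ℝ) : |k / δ * Real.sin (δ * k)| ≤ k ^ 2 := by
  rcases eq_or_ne δ 0 with rfl | hδ
  · simpa using sq_nonneg k
  calc |k / δ * Real.sin (δ * k)| ≤ |k| / |δ| * |δ * k| := by
        rw [abs_mul, abs_div]
        exact mul_le_mul_of_nonneg_left Real.abs_sin_le_abs (by positivity)
    _ = k ^ 2 := by rw [abs_mul, ← sq_abs k]; field_simp

lemma Adelta_eq_crossMatrix (m ε δ k : ℝ) :
    Adelta m ε δ k = crossMatrix ((1 / (1 + m) ^ 2 - 1) * k ^ 2) ((1 + m) / ε)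
      (-2 * (2 - 1 / (1 + m)) * (k / δ) * Real.sin (δ * k)) (m / (ε * (1 + m))) :=
  rfl

lemma Adelta_diag_le_zero {m : ℝ} (hm : 0 ≤ m) (k : ℝ) : (1 / (1 + m) ^ 2 - 1) * k ^ 2 ≤ 0 := by
  have : 1 / (1 + m) ^ 2 ≤ 1 := by
    rw [div_le_one (by positivity)]
    nlinarith
  exact mul_nonpos_of_nonpos_of_nonneg (by linarith) (sq_nonneg k)

lemma Adelta_abs_coupling_le {m ε : ℝ} (hm : 1 ≤ m) (hε : 0 < ε) (δ k : ℝ) :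
    |-2 * (2 - 1 / (1 + m)) * (k / δ) * Real.sin (δ * k) * (m / (ε * (1 + m)))|
      ≤ -((1 / (1 + m) ^ 2 - 1) * k ^ 2 * ((1 + m) / ε)) := by
  have hM : 0 < 1 + m := by linarith
  have hcoef : 0 ≤ 2 * (2 - 1 / (1 + m)) * (m / (ε * (1 + m))) := by
    have hinv : 1 / (1 + m) ≤ 1 := by rw [div_le_one hM]; linarith
    exact mul_nonneg (mul_nonneg zero_le_two (by linarith)) (by positivity)
  calc _ = 2 * (2 - 1 / (1 + m)) * (m / (ε * (1 + m))) * |k / δ * Real.sin (δ * k)| := by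
        rw [← abs_of_nonneg hcoef, ← abs_mul, ← abs_neg]
        ring_nf
    _ ≤ 2 * (2 - 1 / (1 + m)) * (m / (ε * (1 + m))) * k ^ 2 :=
        mul_le_mul_of_nonneg_left (abs_div_mul_sin_mul_le_sq k δ) hcoef
    _ ≤ _ := by
        rw [← sub_nonneg]
        have key : 0 ≤ m * (m - 1) * k ^ 2 :=
          mul_nonneg (mul_nonneg (by linarith) (by linarith)) (sq_nonneg k)
        field_simp
        nlinarith

theorem nonlocal_stable_for_fast_decay_general
    (m ε δ : ℝ) (hm : 1 ≤ m) (hε : 0 < ε) :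
    ∀ k : ℝ, ∀ σ : ℂ, IsEigC (Adelta m ε δ k) σ → σ.re ≤ 0 := by
  intro k σ h
  rw [Adelta_eq_crossMatrix] at h
  have hab : (1 / (1 + m) ^ 2 - 1) * k ^ 2 ≤ (1 + m) / ε :=
    (Adelta_diag_le_zero (by linarith) k).trans (by positivity)
  exact re_nonpos_of_isEigC_crossMatrix hab (Adelta_abs_coupling_le hm hε δ k) h

/-- For `m ≥ 1`, `ε > 0`, `δ > 0` and every wavenumber `k`, every
eigenvalue `σ ∈ ℂ` of `A_δ(k)` has `Re σ ≤ 0`: if the scent decays too rapidly the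
uniform steady state is linearly stable at all wavenumbers. -/
theorem nonlocal_stable_for_fast_decay
    (m ε δ : ℝ) (hm : 1 ≤ m) (hε : 0 < ε) (hδ : 0 < δ) :
    ∀ k : ℝ, ∀ σ : ℂ, IsEigC (Adelta m ε δ k) σ → σ.re ≤ 0 :=
  nonlocal_stable_for_fast_decay_general m ε δ hm hε
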